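/- Let u, v be nonempty words over a well-ordered alphabet with v a Lyndon word. The following are equivalent: (1) u ≺ v^n for some n ≥ 1; (2) u <_lex v^n for all n ≥ 1; (3) the first Lyndon atom in the Lyndon decomposition of u is pseudo-lexicographically smaller than v. -/

import Mathlib

/-!
(1) ⇔ (2): a letter difference with one power of `v` persists in every power, and a power of
`v` longer than `u` cannot be a prefix of `u`.

(3) ⇒ (2): if `v` is a proper prefix of the first atom, `v c` say, the Lyndon property gives
`c <_lex v c`, hence `c <_lex vᵏ c` for all `k`, which forces `c ≺ vᵏ` for large `k`.

(2) ⇒ (3): if `v ≤_lex` the first atom, then `v` is `≤_lex` every atom; since `c ≺ v` whenever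
`v = a c` with `a` a proper prefix, this yields `vᵏ ≤_lex u` for `k` the number of atoms.
-/

variable {X : Type*} [LinearOrder X] [WellFoundedLT X]

/-- The partial order `≺` on words: `u ≺ v` iff `u = r ++ x :: s`, `v = r ++ y :: t`
with letters `x < y`. -/
def Prec (u v : List X) : Prop :=
  ∃ (r s t : List X) (x y : X), x < y ∧ u = r ++ x :: s ∧ v = r ++ y :: t

/-- The pseudo-lexicographic order: `u <_lex v` iff `v` is a proper prefix of `u` or `u ≺ v`. -/
def PLex (u v : List X) : Prop :=
  (v <+: u ∧ v ≠ u) ∨ Prec u v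

/-- `u ≤_lex v`. -/
def PLexLe (u v : List X) : Prop := u = v ∨ PLex u v

/-- A Lyndon word (Kharchenko convention): a nonempty word strictly greater in the
pseudo-lexicographic order than each of its proper nonempty suffixes. -/
def IsLyndon (u : List X) : Prop :=
  u ≠ [] ∧ ∀ v w : List X, u = v ++ w → v ≠ [] → w ≠ [] → PLex w u


/-- `l` is the Lyndon decomposition of `u`: `u` is the concatenation of the Lyndon
words in `l`, listed in nondecreasing pseudo-lexicographic order. -/
def IsLyndonDecomp (u : List X) (l : List (List X)) : Prop :=
  u = l.flatten ∧ (∀ v ∈ l, IsLyndon v) ∧ l.Chain' PLexLe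


/-- `v ^ n`: the `n`-th power of the word `v`. -/
def wpow (v : List X) (n : ℕ) : List X := (List.replicate n v).flatten

section Words

variable {α : Type*}

theorem List.lex_iff_isPrefix_or_exists {r : α → α → Prop} {u v : List α} :
    Lex r u v ↔ (u <+: v ∧ u ≠ v) ∨
      ∃ (p s t : List α) (a b : α), r a b ∧ u = p ++ a :: s ∧ v = p ++ b :: t := by
  constructor
  · intro h
    induction h with
    | nil => exact .inl ⟨nil_prefix, (cons_ne_nil _ _).symm⟩
    | rel h => exact .inr ⟨[], _, _, _, _, h, rfl, rfl⟩
    | @cons a _ _ _ ih =>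
      rcases ih with ⟨hp, hne⟩ | ⟨p, s, t, x, y, hxy, rfl, rfl⟩
      · exact .inl ⟨cons_prefix_cons.2 ⟨rfl, hp⟩, by simpa using hne⟩
      · exact .inr ⟨a :: p, s, t, x, y, hxy, rfl, rfl⟩
  · rintro (⟨⟨_ | ⟨b, t⟩, rfl⟩, hne⟩ | ⟨p, s, t, a, b, hab, rfl, rfl⟩)
    · simp at hne
    · simpa using Lex.nil.append_left r u
    · exact (Lex.rel hab).append_left r p

theorem wpow_succ (v : List α) (n : ℕ) : wpow v (n + 1) = v ++ wpow v n := by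
  rw [wpow, wpow, List.replicate_succ, List.flatten_cons]

theorem wpow_one (v : List α) : wpow v 1 = v := by
  simp [wpow]

theorem wpow_add (v : List α) (m n : ℕ) : wpow v (m + n) = wpow v m ++ wpow v n := by
  rw [wpow, wpow, wpow, List.replicate_add, List.flatten_append]

theorem length_wpow (v : List α) (n : ℕ) : (wpow v n).length = n * v.length := by
  simp [wpow]

theorem le_length_wpow {v : List α} (hv : v ≠ []) (n : ℕ) : n ≤ (wpow v n).length := by
  rw [length_wpow]
  exact Nat.le_mul_of_pos_right n (List.length_pos_iff.2 hv)

variable [LinearOrder α] {u v w p : List α}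

theorem plex_iff_lex : PLex u v ↔ List.Lex (· > ·) v u := by
  rw [List.lex_iff_isPrefix_or_exists, PLex, Prec]
  refine or_congr Iff.rfl ⟨?_, ?_⟩
  · rintro ⟨r, s, t, x, y, hxy, hu, hv⟩
    exact ⟨r, t, s, y, x, hxy, hv, hu⟩
  · rintro ⟨r, t, s, y, x, hxy, hv, hu⟩
    exact ⟨r, s, t, x, y, hxy, hu, hv⟩

theorem PLex.trans (h₁ : PLex u v) (h₂ : PLex v w) : PLex u w := by
  rw [plex_iff_lex] at *
  exact List.lex_trans (fun h h' => h'.trans h) h₂ h₁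

theorem PLex.irrefl (u : List α) : ¬ PLex u u := by
  rw [plex_iff_lex]
  exact List.lex_irrefl (r := (· > ·)) lt_irrefl u

theorem PLexLe.of_not_plex (h : ¬ PLex u v) : PLexLe v u := by
  rw [plex_iff_lex] at h
  rcases trichotomous_of (List.Lex (· > ·)) u v with h' | rfl | h'
  · exact .inr (plex_iff_lex.2 h')
  · exact .inl rfl
  · exact absurd h' h

theorem PLex.trans_plexLe (h₁ : PLex u v) (h₂ : PLexLe v w) : PLex u w := by
  rcases h₂ with rfl | h₂
  exacts [h₁, h₁.trans h₂]

theorem PLexLe.trans (h₁ : PLexLe u v) (h₂ : PLexLe v w) : PLexLe u w := by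
  rcases h₁ with rfl | h₁
  exacts [h₂, .inr (h₁.trans_plexLe h₂)]

instance : @Trans (List α) (List α) (List α) PLexLe PLexLe PLexLe := ⟨PLexLe.trans⟩

theorem PLexLe.not_plex (h : PLexLe u v) : ¬ PLex v u := by
  rcases h with rfl | h
  exacts [PLex.irrefl u, fun h' => PLex.irrefl u (h.trans h')]

theorem plex_nil (hu : u ≠ []) : PLex u [] :=
  .inl ⟨List.nil_prefix, hu.symm⟩

theorem PLex.append_left (h : PLex u v) (w : List α) : PLex (w ++ u) (w ++ v) :=
  plex_iff_lex.2 ((plex_iff_lex.1 h).append_left _ w)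

theorem PLexLe.append_left (h : PLexLe u v) (w : List α) : PLexLe (w ++ u) (w ++ v) := by
  rcases h with rfl | h
  exacts [.inl rfl, .inr (h.append_left w)]

theorem PLex.append_right (h : PLex u v) (w : List α) : PLex (u ++ w) v :=
  plex_iff_lex.2 ((plex_iff_lex.1 h).append_right _ w)

theorem Prec.plex (h : Prec u v) : PLex u v := .inr h

theorem Prec.append (h : Prec u v) (s t : List α) : Prec (u ++ s) (v ++ t) := by
  obtain ⟨r, s', t', x, y, hxy, rfl, rfl⟩ := h
  exact ⟨r, s' ++ s, t' ++ t, x, y, hxy, by simp, by simp⟩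

theorem Prec.plex_of_prefix (h : Prec u w) (hp : p <+: w) : PLex u p := by
  obtain ⟨r, s, t, x, y, hxy, rfl, rfl⟩ := h
  rcases List.prefix_or_prefix_of_prefix hp (⟨t, by simp⟩ : r ++ [y] <+: r ++ y :: t)
    with hp | ⟨t', rfl⟩
  · rw [List.prefix_concat_iff] at hp
    rcases hp with rfl | hp
    · exact Prec.plex ⟨r, s, [], x, y, hxy, rfl, rfl⟩
    refine .inl ⟨hp.trans (List.prefix_append r _), fun h => ?_⟩
    simpa [h] using hp.length_le
  · exact Prec.plex ⟨r, s, t', x, y, hxy, rfl, by simp⟩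

theorem PLex.prec_of_length_le (h : PLex u v) (hl : u.length ≤ v.length) : Prec u v :=
  h.resolve_left fun ⟨hp, hne⟩ => hne (hp.eq_of_length_le hl)

theorem Prec.plex_wpow {n : ℕ} (h : Prec u (wpow v n)) (m : ℕ) : PLex u (wpow v m) := by
  rcases le_total m n with hmn | hnm
  · exact h.plex_of_prefix ⟨wpow v (n - m), by rw [← wpow_add, Nat.add_sub_cancel' hmn]⟩
  · rw [← Nat.add_sub_cancel' hnm, wpow_add, ← List.append_nil u]
    exact (h.append [] _).plex

theorem exists_prec_wpow_iff_forall_plex_wpow (hv : v ≠ []) :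
    (∃ n : ℕ, 1 ≤ n ∧ Prec u (wpow v n)) ↔ ∀ n : ℕ, 1 ≤ n → PLex u (wpow v n) := by
  refine ⟨fun ⟨n, _, h⟩ m _ => h.plex_wpow m, fun h => ⟨u.length + 1, by omega, ?_⟩⟩
  exact (h _ (by omega)).prec_of_length_le ((Nat.le_succ _).trans (le_length_wpow hv _))

theorem plex_wpow_of_plex_append (hv : v ≠ []) (h : PLex w (v ++ w)) (n : ℕ) :
    PLex w (wpow v n) := by
  -- Iterating `w <_lex v w` gives `w <_lex vᵏ w`; once `vᵏ` is longer than `w`, the two words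
  -- differ inside `vᵏ`.
  have hpow : ∀ k, PLex w (wpow v (k + 1) ++ w) := by
    intro k
    induction k with
    | zero => simpa [wpow_one] using h
    | succ k ih => exact h.trans (by simpa [wpow_succ] using ih.append_left v)
  have hlen : w.length ≤ (wpow v (w.length + 1)).length :=
    (Nat.le_succ _).trans (le_length_wpow hv _)
  have hprec : Prec w (wpow v (w.length + 1)) :=
    ((hpow _).prec_of_length_le (by simp)).plex_of_prefix
      (List.prefix_append _ _) |>.prec_of_length_le hlen
  exact hprec.plex_wpow n

theorem IsLyndon.prec_append_of_ne_nil (h : IsLyndon (u ++ v)) (hu : u ≠ []) (hv : v ≠ []) :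
    Prec v (u ++ v) :=
  (h.2 u v rfl hu hv).prec_of_length_le (by simp)

theorem IsLyndon.plex_wpow_of_plex (hu : IsLyndon u) (hv : v ≠ []) (h : PLex u v) (n : ℕ) :
    PLex u (wpow v n) := by
  rcases h with ⟨⟨c, rfl⟩, hne⟩ | h
  · have hc : c ≠ [] := by rintro rfl; simp at hne
    cases n with
    | zero => exact plex_nil hu.1
    | succ n =>
      rw [wpow_succ]
      exact (plex_wpow_of_plex_append hv (hu.prec_append_of_ne_nil hv hc).plex n).append_left v
  · exact (by rwa [wpow_one] : Prec u (wpow v 1)).plex_wpow n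

theorem IsLyndon.wpow_length_plexLe_flatten (hv : IsLyndon v) {l : List (List α)}
    (hl : ∀ w ∈ l, w ≠ [] ∧ PLexLe v w) : PLexLe (wpow v l.length) l.flatten := by
  induction l with
  | nil => exact .inl rfl
  | cons a l ih =>
    obtain ⟨ha, hva⟩ := hl a List.mem_cons_self
    have ih := ih fun w hw => hl w (List.mem_cons_of_mem a hw)
    rw [List.length_cons, wpow_succ, List.flatten_cons]
    rcases hva with rfl | ⟨⟨c, hac⟩, hne⟩ | hva
    · exact ih.append_left v
    · have hc : c ≠ [] := by rintro rfl; simp_all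
      have hcv : Prec c (wpow v 1) := by
        rw [wpow_one, ← hac]
        exact (hac ▸ hv).prec_append_of_ne_nil ha hc
      have hcl : PLex (c ++ wpow v l.length) l.flatten :=
        ((hcv.plex_wpow _).append_right _).trans_plexLe ih
      rw [show v ++ wpow v l.length = a ++ (c ++ wpow v l.length) by
        rw [← List.append_assoc, hac]]
      exact .inr (hcl.append_left a)
    · exact .inr (hva.append _ _).plex

end Words

/-- For nonempty words `u, v` with `v` Lyndon, the following are
equivalent: (1) `u ≺ vⁿ` for some `n ≥ 1`; (2) `u <_lex vⁿ` for all `n ≥ 1`;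
(3) the first Lyndon atom of `u` is `<_lex v`. -/
theorem prec_pow_iff_plex_pow_iff_first_atom (u v : List X) (hu : u ≠ [])
    (hv : IsLyndon v) (l : List (List X)) (hl : IsLyndonDecomp u l) :
    ((∃ n : ℕ, 1 ≤ n ∧ Prec u (wpow v n)) ↔ (∀ n : ℕ, 1 ≤ n → PLex u (wpow v n))) ∧
    ((∀ n : ℕ, 1 ≤ n → PLex u (wpow v n)) ↔ PLex l.headI v) := by
  obtain ⟨rfl, hlyndon, hchain⟩ := hl
  obtain _ | ⟨a, l⟩ := l
  · exact absurd rfl hu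
  refine ⟨exists_prec_wpow_iff_forall_plex_wpow hv.1, fun h => ?_, fun h n _ => ?_⟩
  · by_contra hva
    have hva : PLexLe v a := .of_not_plex hva
    have hle : ∀ w ∈ a :: l, w ≠ [] ∧ PLexLe v w := by
      intro w hw
      refine ⟨(hlyndon w hw).1, ?_⟩
      rcases List.mem_cons.1 hw with rfl | hw
      exacts [hva, hva.trans (hchain.rel_cons hw)]
    exact (hv.wpow_length_plexLe_flatten hle).not_plex (h _ (by simp))
  · rw [List.flatten_cons]
    exact ((hlyndon a List.mem_cons_self).plex_wpow_of_plex hv.1 h n).append_right _
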